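/- arXiv:1006.4536 — 2 statements merged into one kernel-verified Lean document; each statement's English description precedes it below -/
import Mathlib

section
/- For every d ≥ 1 and every subset A ⊆ K, the cut function h' of the noise sparsifier H for G_d satisfies the exact identity h'(A) = (k·√d/4) · (1 − NS_ρ(f_A)), where ρ = 1 − 1/√d and k = 2^d. -/
open Finset

/-- Vertices of the `d`-dimensional Boolean hypercube. -/
abbrev Cube (d : ℕ) := Fin d → Bool

/-- Hamming distance between two Boolean strings. -/
def hamm {d : ℕ} (s t : Cube d) : ℕ := (Finset.univ.filter fun i => s i ≠ t i).card

/-- The vertex set of the graph `G_d`: `Sum.inl s` is the hypercube vertex `y_s`,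
`Sum.inr s` is the terminal `z_s`. -/
abbrev Vtx (d : ℕ) := Cube d ⊕ Cube d

/-- Edge capacities of the graph `G_d`: hypercube edges (Hamming distance `1`) have
capacity `1`, each terminal `z_s` is attached to `y_s` by an edge of capacity `√d`. -/
noncomputable def gCap (d : ℕ) : Vtx d → Vtx d → ℝ
  | Sum.inl s, Sum.inl t => if hamm s t = 1 then 1 else 0
  | Sum.inl s, Sum.inr t => if s = t then Real.sqrt d else 0
  | Sum.inr s, Sum.inl t => if s = t then Real.sqrt d else 0
  | Sum.inr _, Sum.inr _ => 0

/-- The cut function of a capacitated graph: total capacity of edges crossing `A`.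
(Each unordered crossing edge `{u,v}` with `u ∈ A`, `v ∉ A` is counted once.) -/
noncomputable def cutFun {V : Type*} [Fintype V] [DecidableEq V]
    (c : V → V → ℝ) (A : Finset V) : ℝ :=
  ∑ u ∈ A, ∑ v ∈ Aᶜ, c u v

/-- The terminal set `K = {z_s}` of `G_d`. -/
def Kset (d : ℕ) : Finset (Vtx d) := Finset.univ.image Sum.inr

/-- The terminal cut function: `h_K(U) = min { h(A) : A ∩ K = U }`. -/
noncomputable def termCut {V : Type*} [Fintype V] [DecidableEq V]
    (c : V → V → ℝ) (K U : Finset V) : ℝ :=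
  sInf {x : ℝ | ∃ A : Finset V, A ∩ K = U ∧ cutFun c A = x}

/-- The terminal cut function of `G_d`, for a set `A` of terminals (identified with
Boolean strings). -/
noncomputable def hK (d : ℕ) (A : Finset (Cube d)) : ℝ :=
  termCut (gCap d) (Kset d) (A.image Sum.inr)

/-- The flip probability `p = (1 - ρ)/2` where `ρ = 1 - 1/√d`. -/
noncomputable def noiseP (d : ℕ) : ℝ := (1 - (1 - 1 / Real.sqrt d)) / 2

/-- Capacities of the noise sparsifier `H`:
`c_H(z_s, z_t) = √d · p^{Hamm(s,t)} · (1-p)^{d - Hamm(s,t)}` for `s ≠ t`. -/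
noncomputable def noiseCap (d : ℕ) (s t : Cube d) : ℝ :=
  if s = t then 0
  else Real.sqrt d * noiseP d ^ hamm s t * (1 - noiseP d) ^ (d - hamm s t)

/-- The character `χ_S(x) = Π_{i ∈ S} x_i`, with the Boolean value `true`
interpreted as `-1` and `false` as `+1`. -/
def chi {d : ℕ} (S : Finset (Fin d)) (x : Cube d) : ℝ := ∏ i ∈ S, (if x i then -1 else 1)

/-- The Fourier coefficient `f̂_S = E_x [f(x) χ_S(x)]`. -/
noncomputable def fCoeff {d : ℕ} (f : Cube d → ℝ) (S : Finset (Fin d)) : ℝ :=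
  (∑ x : Cube d, f x * chi S x) / 2 ^ d

/-- The `±1`-valued indicator function of a set `A` of terminals. -/
def fA {d : ℕ} (A : Finset (Cube d)) : Cube d → ℝ := fun s => if s ∈ A then 1 else -1

/-- Noise stability `NS_ρ(f) = E_{x, y ∼_ρ x}[f(x) f(y)]`, where `y` is obtained from
the uniformly random `x` by independently flipping each coordinate with probability
`(1-ρ)/2`. -/
noncomputable def noiseStab (d : ℕ) (ρ : ℝ) (f : Cube d → ℝ) : ℝ :=
  (∑ x : Cube d, ∑ y : Cube d,
    ((1 - ρ) / 2) ^ hamm x y * ((1 + ρ) / 2) ^ (d - hamm x y) * f x * f y) / 2 ^ d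

/-! Writing `f = f_A`, one has `f(x) f(y) = 1 - 2·[exactly one of x, y lies in A]`. Averaged
against a symmetric kernel whose rows sum to one, such as the `ρ`-noise kernel
`p^{Hamm(x,y)} (1-p)^{d-Hamm(x,y)}`, this gives `NS_ρ(f_A) = 1 - 4·cut(A)/2^d`, where the cut
is taken with respect to the kernel. The capacities of `H` are `√d` times that kernel away from
the diagonal, and only off-diagonal pairs cross a cut. -/

section Cut

variable {V : Type*} [Fintype V] [DecidableEq V]

lemma cutFun_eq_mul_of_ne {c w : V → V → ℝ} (k : ℝ) (h : ∀ u v, u ≠ v → c u v = k * w u v)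
    (A : Finset V) : cutFun c A = k * cutFun w A := by
  simp only [cutFun, Finset.mul_sum]
  refine Finset.sum_congr rfl fun u hu => Finset.sum_congr rfl fun v hv => h u v ?_
  rintro rfl
  exact Finset.mem_compl.mp hv hu

lemma sum_sum_mul_sign_mul_sign {w : V → V → ℝ} (hw : ∀ x y, w x y = w y x) (A : Finset V) :
    ∑ x, ∑ y, w x y * (if x ∈ A then 1 else -1) * (if y ∈ A then 1 else -1) =
      ∑ x, ∑ y, w x y - 4 * cutFun w A := by
  set cross : V → V → ℝ := fun x y => if x ∈ A ∧ y ∈ Aᶜ then w x y else 0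
  have hsign : ∀ x y, w x y * (if x ∈ A then 1 else -1) * (if y ∈ A then 1 else -1) =
      w x y - 2 * cross x y - 2 * cross y x := by
    intro x y
    by_cases hx : x ∈ A <;> by_cases hy : y ∈ A <;> simp [cross, hx, hy, hw y x] <;> ring
  have hcut : ∑ x, ∑ y, cross x y = cutFun w A := by
    simp only [cutFun, cross, ite_and, Finset.sum_ite_irrel, Finset.sum_const_zero,
      Finset.sum_ite_mem, Finset.univ_inter]
  have hswap : ∑ x, ∑ y, cross y x = ∑ x, ∑ y, cross x y := Finset.sum_comm
  simp only [hsign, Finset.sum_sub_distrib, ← Finset.mul_sum, hswap, hcut]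
  ring

end Cut

section NoiseKernel

noncomputable def noiseKernel (d : ℕ) (p : ℝ) (x y : Cube d) : ℝ :=
  p ^ hamm x y * (1 - p) ^ (d - hamm x y)

variable {d : ℕ}

lemma hamm_comm (x y : Cube d) : hamm x y = hamm y x := by
  simp only [hamm, ne_comm]

lemma noiseKernel_comm (p : ℝ) (x y : Cube d) : noiseKernel d p x y = noiseKernel d p y x := by
  rw [noiseKernel, noiseKernel, hamm_comm]

lemma noiseKernel_eq_prod (p : ℝ) (x y : Cube d) :
    noiseKernel d p x y = ∏ i, if x i = y i then 1 - p else p := by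
  have hcard := Finset.card_filter_add_card_filter_not (s := Finset.univ) (fun i => x i = y i)
  rw [Finset.card_univ, Fintype.card_fin] at hcard
  have hagree : (Finset.univ.filter fun i => x i = y i).card = d - hamm x y := by
    simp only [hamm, ne_eq] at hcard ⊢; omega
  rw [Finset.prod_ite, Finset.prod_const, Finset.prod_const, hagree, noiseKernel, mul_comm]
  rfl

lemma sum_noiseKernel_eq_one (p : ℝ) (x : Cube d) : ∑ y, noiseKernel d p x y = 1 := by
  simp only [noiseKernel_eq_prod]
  rw [← Fintype.prod_sum (fun i b => if x i = b then 1 - p else p)]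
  refine Finset.prod_eq_one fun i _ => ?_
  cases x i <;> simp

lemma noiseStab_eq_sum_noiseKernel (ρ : ℝ) (f : Cube d → ℝ) :
    noiseStab d ρ f = (∑ x, ∑ y, noiseKernel d ((1 - ρ) / 2) x y * f x * f y) / 2 ^ d := by
  have hstay : (1 + ρ) / 2 = 1 - (1 - ρ) / 2 := by ring
  rw [noiseStab, hstay]
  rfl

lemma noiseStab_fA (ρ : ℝ) (A : Finset (Cube d)) :
    noiseStab d ρ (fA A) = 1 - 4 * cutFun (noiseKernel d ((1 - ρ) / 2)) A / 2 ^ d := by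
  rw [noiseStab_eq_sum_noiseKernel]
  simp only [fA]
  rw [sum_sum_mul_sign_mul_sign (noiseKernel_comm _), Finset.sum_congr rfl
    fun x _ => sum_noiseKernel_eq_one _ x, Finset.sum_const, Finset.card_univ,
    Fintype.card_fun, Fintype.card_bool, Fintype.card_fin]
  field_simp
  ring

end NoiseKernel

theorem noise_sparsifier_cut_eq_noise_stability_general (d : ℕ) (A : Finset (Cube d)) :
    cutFun (noiseCap d) A =
      (2 ^ d * Real.sqrt d / 4) * (1 - noiseStab d (1 - 1 / Real.sqrt d) (fA A)) := by
  have hcap : cutFun (noiseCap d) A = Real.sqrt d * cutFun (noiseKernel d (noiseP d)) A :=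
    cutFun_eq_mul_of_ne _ (fun s t hst => by simp [noiseCap, noiseKernel, hst, mul_assoc]) A
  rw [hcap, noiseStab_fA, noiseP]
  field_simp
  ring

/-- For every `d ≥ 1` and every `A ⊆ K`, the cut function of the noise
sparsifier satisfies `h'(A) = (k √d / 4) · (1 - NS_ρ(f_A))` with `ρ = 1 - 1/√d`. -/
theorem noise_sparsifier_cut_eq_noise_stability (d : ℕ) (hd : 1 ≤ d) (A : Finset (Cube d)) :
    cutFun (noiseCap d) A =
      (2 ^ d * Real.sqrt d / 4) * (1 - noiseStab d (1 - 1 / Real.sqrt d) (fA A)) :=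
  noise_sparsifier_cut_eq_noise_stability_general d A
end

section
/- Let d ≥ 1, A ⊆ K, ν ≥ 0, and j ∈ ℕ. If the Boolean function f_A is a (ν, j)-junta, then the terminal cut function of G_d satisfies h_K(A) ≤ k·ν·√d + j·k/2, where k = 2^d. -/
open Finset

/-!
Let `g` be the junta close to `f_A`, and cut off `{y_s : g(s) = 1} ∪ {z_s : s ∈ A}`. A terminal
edge `z_s y_s` (capacity `√d`) is cut only when `f_A(s) ≠ g(s)`, which happens for at most
`ν k` strings. A hypercube edge is cut only if `g` changes along it, so it flips one of the `j`
coordinates `g` depends on; there are at most `j k / 2` such edges.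
-/

lemma eq_update_of_hamm_eq_one {d : ℕ} {s t : Cube d} (h : hamm s t = 1) :
    ∃ i, t = Function.update s i (!s i) := by
  obtain ⟨i, hi⟩ := Finset.card_eq_one.mp h
  have hdiff : ∀ k, s k ≠ t k ↔ k = i := fun k => by
    simpa using Finset.ext_iff.mp hi k
  refine ⟨i, funext fun k => ?_⟩
  rcases eq_or_ne k i with rfl | hk
  · have := (hdiff k).mpr rfl
    cases h : s k <;> simp_all
  · simpa [hk, eq_comm] using (hdiff k).not.mpr hk

def cubeBoundary {d : ℕ} (T : Finset (Cube d)) : Finset (Cube d × Cube d) :=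
  (T ×ˢ Tᶜ).filter fun q => hamm q.1 q.2 = 1

/-- Every edge leaving a set that only depends on the coordinates in `S` is the flip of
a coordinate in `S`, and its two orientations are distinct such flips. -/
lemma two_mul_card_cubeBoundary_le {d : ℕ} (T : Finset (Cube d)) (S : Finset (Fin d))
    (hT : ∀ x y : Cube d, (∀ i ∈ S, x i = y i) → (x ∈ T ↔ y ∈ T)) :
    2 * #(cubeBoundary T) ≤ #S * 2 ^ d := by
  set B := cubeBoundary T
  have hflip : B ∪ B.image Prod.swap ⊆
      (S ×ˢ univ).image fun p : Fin d × Cube d => (p.2, Function.update p.2 p.1 (!p.2 p.1)) := by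
    have exists_flip : ∀ s t : Cube d, hamm s t = 1 → (s ∈ T ↔ t ∉ T) →
        ∃ i ∈ S, t = Function.update s i (!s i) := by
      intro s t hst hT'
      obtain ⟨i, rfl⟩ := eq_update_of_hamm_eq_one hst
      refine ⟨i, by_contra fun hi => ?_, rfl⟩
      have := hT s (Function.update s i (!s i)) fun k hk => by
        rw [Function.update_of_ne (by rintro rfl; exact hi hk)]
      tauto
    intro q hq
    simp only [B, cubeBoundary, mem_union, mem_image, mem_filter, mem_product, mem_compl] at hq
    simp only [mem_image, mem_product, mem_univ, and_true, Prod.exists]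
    rcases hq with ⟨⟨hs, ht⟩, hst⟩ | ⟨⟨s, t⟩, ⟨⟨hs, ht⟩, hst⟩, rfl⟩
    · obtain ⟨i, hi, he⟩ := exists_flip q.1 q.2 hst (by tauto)
      exact ⟨i, q.1, hi, by rw [← he]⟩
    · obtain ⟨i, hi, he⟩ := exists_flip t s ((hammingDist_comm t s).trans hst) (by tauto)
      exact ⟨i, t, hi, by rw [← he]; rfl⟩
  have hdisj : Disjoint B (B.image Prod.swap) := by
    simp only [B, cubeBoundary, disjoint_left, mem_image, mem_filter, mem_product, mem_compl]
    rintro q ⟨⟨hq, -⟩, -⟩ ⟨r, ⟨⟨-, hr⟩, -⟩, rfl⟩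
    exact hr hq
  calc 2 * #B = #(B ∪ B.image Prod.swap) := by
        rw [card_union_of_disjoint hdisj, card_image_of_injective _ Prod.swap_injective, two_mul]
    _ ≤ #((S ×ˢ univ).image _) := card_le_card hflip
    _ ≤ #(S ×ˢ (univ : Finset (Cube d))) := card_image_le
    _ = #S * 2 ^ d := by simp

lemma termCut_le_cutFun {V : Type*} [Fintype V] [DecidableEq V] (c : V → V → ℝ)
    {K U A : Finset V} (hA : A ∩ K = U) : termCut c K U ≤ cutFun c A := by
  refine csInf_le (Set.Finite.bddBelow ?_) ⟨A, hA, rfl⟩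
  exact (Set.finite_range (cutFun c)).subset fun _ ⟨B, _, hB⟩ => ⟨B, hB⟩

lemma Finset.compl_disjSum {α β : Type*} [Fintype α] [Fintype β] [DecidableEq α]
    [DecidableEq β] (s : Finset α) (t : Finset β) : (s.disjSum t)ᶜ = sᶜ.disjSum tᶜ := by
  ext (x | x) <;> simp

lemma sum_sum_ite_eq {α R : Type*} [DecidableEq α] [NonAssocSemiring R] (s t : Finset α)
    (r : R) :
    ∑ x ∈ s, ∑ y ∈ t, (if x = y then r else 0) = r * #(s ∩ t) := by
  simpa [sum_ite_eq] using Nat.cast_comm _ r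

lemma cutFun_gCap_disjSum {d : ℕ} (T A : Finset (Cube d)) :
    cutFun (gCap d) (T.disjSum A) = #(cubeBoundary T) + √d * (#(T \ A) + #(A \ T)) := by
  have hcube : ∑ s ∈ T, ∑ t ∈ Tᶜ, gCap d (.inl s) (.inl t) = #(cubeBoundary T) := by
    rw [cubeBoundary, ← sum_boole, sum_product' T Tᶜ fun s t => if hamm s t = 1 then 1 else 0]
    rfl
  have hlr : ∑ s ∈ T, ∑ t ∈ Aᶜ, gCap d (.inl s) (.inr t) = √d * #(T \ A) := by
    rw [sdiff_eq_inter_compl]; exact sum_sum_ite_eq T Aᶜ _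
  have hrl : ∑ s ∈ A, ∑ t ∈ Tᶜ, gCap d (.inr s) (.inl t) = √d * #(A \ T) := by
    rw [sdiff_eq_inter_compl]; exact sum_sum_ite_eq A Tᶜ _
  have hrr : ∑ s ∈ A, ∑ t ∈ Aᶜ, gCap d (.inr s) (.inr t) = 0 := by simp [gCap]
  rw [cutFun, Finset.compl_disjSum, sum_disjSum]
  simp only [sum_disjSum, sum_add_distrib, hcube, hlr, hrl, hrr]
  ring

lemma card_sdiff_add_card_sdiff_le_card_ne {d : ℕ} {A T : Finset (Cube d)} {g : Cube d → ℝ}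
    (hT : ∀ x, x ∈ T ↔ g x = 1) :
    #(T \ A) + #(A \ T) ≤ #(univ.filter fun x => fA A x ≠ g x) := by
  rw [← card_union_of_disjoint disjoint_sdiff_sdiff]
  refine card_le_card fun x hx => mem_filter.mpr ⟨mem_univ x, ?_⟩
  simp only [mem_union, mem_sdiff, hT] at hx
  by_cases hxA : x ∈ A
  · simp_all [fA, eq_comm]
  · simp_all [fA]
    norm_num

theorem junta_implies_small_cut_general (d : ℕ) (A : Finset (Cube d))
    (ν : ℝ) (j : ℕ)
    (hjunta : ∃ g : Cube d → ℝ, (∀ x, g x = 1 ∨ g x = -1) ∧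
      (∃ S : Finset (Fin d), S.card ≤ j ∧
        ∀ x y : Cube d, (∀ i ∈ S, x i = y i) → g x = g y) ∧
      ((Finset.univ.filter fun x => fA A x ≠ g x).card : ℝ) ≤ ν * 2 ^ d) :
    hK d A ≤ 2 ^ d * ν * Real.sqrt d + j * 2 ^ d / 2 := by
  obtain ⟨g, -, ⟨S, hSj, hgS⟩, hmis⟩ := hjunta
  set T : Finset (Cube d) := {x | g x = 1}
  have hboundary : (2 * #(cubeBoundary T) : ℝ) ≤ j * 2 ^ d := by
    exact_mod_cast (two_mul_card_cubeBoundary_le T S fun x y hxy => by simp [T, hgS x y hxy]).trans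
      (Nat.mul_le_mul_right _ hSj)
  have hterminal : (#(T \ A) + #(A \ T) : ℝ) ≤ ν * 2 ^ d :=
    le_trans (by exact_mod_cast card_sdiff_add_card_sdiff_le_card_ne fun x => by simp [T]) hmis
  calc hK d A ≤ cutFun (gCap d) (T.disjSum A) :=
        termCut_le_cutFun _ (by ext (x | x) <;> simp [Kset])
    _ = #(cubeBoundary T) + √d * (#(T \ A) + #(A \ T)) := cutFun_gCap_disjSum T A
    _ ≤ j * 2 ^ d / 2 + √d * (ν * 2 ^ d) := by gcongr; linarith
    _ = 2 ^ d * ν * Real.sqrt d + j * 2 ^ d / 2 := by ring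

/-- If `f_A` is a `(ν, j)`-junta — i.e. there is a Boolean function
`g` depending on at most `j` coordinates with `Pr_x[f_A(x) ≠ g(x)] ≤ ν` — then
`h_K(A) ≤ k ν √d + j k / 2` where `k = 2^d`. -/
theorem junta_implies_small_cut (d : ℕ) (hd : 1 ≤ d) (A : Finset (Cube d))
    (ν : ℝ) (hν : 0 ≤ ν) (j : ℕ)
    (hjunta : ∃ g : Cube d → ℝ, (∀ x, g x = 1 ∨ g x = -1) ∧
      (∃ S : Finset (Fin d), S.card ≤ j ∧
        ∀ x y : Cube d, (∀ i ∈ S, x i = y i) → g x = g y) ∧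
      ((Finset.univ.filter fun x => fA A x ≠ g x).card : ℝ) ≤ ν * 2 ^ d) :
    hK d A ≤ 2 ^ d * ν * Real.sqrt d + j * 2 ^ d / 2 :=
  junta_implies_small_cut_general d A ν j hjunta
end
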